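/- arXiv:2511.12903 — 2 statements merged into one kernel-verified Lean document; each statement's English description precedes it below -/
import Mathlib

section
/- Let N ≥ 1 and X₁, …, X_N ∈ ℝ, and let p(x) = (1/N) Σ_{n=1}^N exp(−(x − X_n)²) be an unnormalized equal-weight Gaussian mixture. Then the integral of its third power has the closed form ∫_ℝ p(x)³ dx = √(π/3) · (1/N³) · Σ_{n=1}^N Σ_{p=1}^N Σ_{q=1}^N exp(−(1/3)((X_n − X_p)² + (X_p − X_q)² + (X_n − X_q)²)). -/
open MeasureTheory Real

private lemma gauss3_key (a b c x : ℝ) :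
    Real.exp (-(x - a) ^ 2) * Real.exp (-(x - b) ^ 2) * Real.exp (-(x - c) ^ 2)
      = Real.exp (-(1 / 3 : ℝ) * ((a - b) ^ 2 + (b - c) ^ 2 + (a - c) ^ 2)) *
          Real.exp (-3 * (x - (a + b + c) / 3) ^ 2) := by
  rw [← Real.exp_add, ← Real.exp_add, ← Real.exp_add]
  congr 1
  ring

private lemma gauss3_integrable (a b c : ℝ) :
    Integrable (fun x : ℝ =>
      Real.exp (-(x - a) ^ 2) * Real.exp (-(x - b) ^ 2) * Real.exp (-(x - c) ^ 2)) := by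
  simp_rw [gauss3_key]
  exact ((integrable_exp_neg_mul_sq (by norm_num : (0:ℝ) < 3)).comp_sub_right
    ((a + b + c) / 3)).const_mul _

private lemma gauss3_integral (a b c : ℝ) :
    ∫ x : ℝ, Real.exp (-(x - a) ^ 2) * Real.exp (-(x - b) ^ 2) * Real.exp (-(x - c) ^ 2)
      = Real.sqrt (Real.pi / 3) *
          Real.exp (-(1 / 3 : ℝ) * ((a - b) ^ 2 + (b - c) ^ 2 + (a - c) ^ 2)) := by
  simp_rw [gauss3_key]
  rw [integral_const_mul _ _]
  have h : ∫ x : ℝ, Real.exp (-3 * (x - (a + b + c) / 3) ^ 2) = Real.sqrt (Real.pi / 3) := by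
    rw [integral_sub_right_eq_self (fun x => Real.exp (-3 * x ^ 2)) ((a + b + c) / 3),
      integral_gaussian]
  rw [h, mul_comm]

/-- Closed form for the integral of the third power of an unnormalized equal-weight Gaussian
mixture `p(x) = (1/N) Σₙ exp(-(x - Xₙ)²)`. -/
theorem integral_cube_gaussian_mixture (N : ℕ) (hN : 1 ≤ N) (X : Fin N → ℝ) :
    ∫ x : ℝ, ((1 / (N : ℝ)) * ∑ n, Real.exp (-(x - X n) ^ 2)) ^ 3 =
      Real.sqrt (Real.pi / 3) * (1 / (N : ℝ) ^ 3) *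
        ∑ n, ∑ p, ∑ q,
          Real.exp (-(1 / 3 : ℝ) *
            ((X n - X p) ^ 2 + (X p - X q) ^ 2 + (X n - X q) ^ 2)) := by
  have hpt : ∀ x : ℝ, ((1 / (N : ℝ)) * ∑ n, Real.exp (-(x - X n) ^ 2)) ^ 3
      = (1 / (N : ℝ) ^ 3) * ∑ n, ∑ p, ∑ q,
          Real.exp (-(x - X n) ^ 2) * Real.exp (-(x - X p) ^ 2) *
            Real.exp (-(x - X q) ^ 2) := by
    intro x
    rw [mul_pow]
    congr 1
    · ring
    · rw [pow_succ, sq, Finset.sum_mul_sum, Finset.sum_mul]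
      refine Finset.sum_congr rfl fun n _ => ?_
      rw [Finset.sum_mul]
      refine Finset.sum_congr rfl fun p _ => ?_
      rw [Finset.mul_sum]
  simp_rw [hpt]
  rw [integral_const_mul _ _,
    integral_finset_sum _ (fun n _ => integrable_finset_sum _ (fun p _ =>
      integrable_finset_sum _ (fun q _ => gauss3_integrable _ _ _)))]
  have : ∀ n : Fin N, (∫ x : ℝ, ∑ p, ∑ q,
        Real.exp (-(x - X n) ^ 2) * Real.exp (-(x - X p) ^ 2) * Real.exp (-(x - X q) ^ 2))
      = ∑ p, ∑ q, Real.sqrt (Real.pi / 3) *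
          Real.exp (-(1 / 3 : ℝ) *
            ((X n - X p) ^ 2 + (X p - X q) ^ 2 + (X n - X q) ^ 2)) := by
    intro n
    rw [integral_finset_sum _ (fun p _ =>
      integrable_finset_sum _ (fun q _ => gauss3_integrable _ _ _))]
    refine Finset.sum_congr rfl fun p _ => ?_
    rw [integral_finset_sum _ (fun q _ => gauss3_integrable _ _ _)]
    exact Finset.sum_congr rfl fun q _ => gauss3_integral _ _ _
  simp_rw [this, ← Finset.mul_sum]
  ring
end

section
/- Let K be a real symmetric positive semidefinite N × N matrix whose diagonal entries are all equal to a constant c ≥ 0, and let p, q ∈ ℝ^N be probability vectors (nonnegative entries summing to 1). Then the nuclear norm of the matrix diag(√p) · K · diag(√q) is at most c, where diag(√p) is the diagonal matrix with entries √(p_i). In particular the nuclear norm of the probability-weighted Gaussian Gram matrix is upper bounded by the Gaussian's value at zero. -/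
open Matrix BigOperators
open scoped RealInnerProductSpace

/-!
Since `K` is positive semidefinite, `K = Bᵀ B`, so `diag(√p) K diag(√q) = A Cᵀ` with
`A = diag(√p) Bᵀ` and `C = diag(√q) Bᵀ`; then `tr (A Aᵀ) = ∑ pᵢ Kᵢᵢ = c` and likewise
`tr (C Cᵀ) = c`. For any factorisation `M = A Cᵀ`, pairing `M` with its left and right singular
vectors `uᵢ, wᵢ` gives `∑ σᵢ = ∑ ⟪Aᵀ uᵢ, Cᵀ wᵢ⟫`, which by Cauchy–Schwarz and Bessel's inequality
is at most `√tr (A Aᵀ) · √tr (C Cᵀ)`.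
-/

/-- The nuclear norm of a real matrix `M`: the sum of its singular values, where the singular
values are the square roots of the eigenvalues of the symmetric PSD matrix `Mᵀ M`. -/
noncomputable def nuclearNorm {m n : ℕ} (M : Matrix (Fin m) (Fin n) ℝ) : ℝ :=
  ∑ i, Real.sqrt ((show (Mᵀ * M).IsHermitian by
    simpa only [Matrix.conjTranspose_eq_transpose_of_trivial] using
      Matrix.isHermitian_conjTranspose_mul_self M).eigenvalues i)

section
variable {κ ι α : Type*} [Fintype κ] [Fintype ι] [Fintype α]

lemma sum_dotProduct_le_sqrt_mul_sqrt (x y : α → ι → ℝ) :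
    ∑ a, x a ⬝ᵥ y a ≤ √(∑ a, x a ⬝ᵥ x a) * √(∑ a, y a ⬝ᵥ y a) := by
  simpa only [dotProduct, ← Finset.sum_product', Finset.univ_product_univ, sq] using
    Real.sum_mul_le_sqrt_mul_sqrt Finset.univ (fun p : α × ι => x p.1 p.2) (fun p => y p.1 p.2)

lemma Orthonormal.sum_transpose_mulVec_dotProduct_self_le (A : Matrix κ ι ℝ)
    {u : α → EuclideanSpace ℝ κ} (hu : Orthonormal ℝ u) :
    ∑ a, (Aᵀ *ᵥ u a) ⬝ᵥ (Aᵀ *ᵥ u a) ≤ (A * Aᵀ).trace := by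
  have hcol : ∀ a k, (Aᵀ *ᵥ u a) k = ⟪u a, WithLp.toLp 2 (Aᵀ k)⟫ := fun a k => rfl
  calc ∑ a, (Aᵀ *ᵥ u a) ⬝ᵥ (Aᵀ *ᵥ u a)
      = ∑ k, ∑ a, ⟪u a, WithLp.toLp 2 (Aᵀ k)⟫ ^ 2 := by
        simp only [dotProduct, hcol, ← sq]; exact Finset.sum_comm
    _ ≤ ∑ k, ‖WithLp.toLp 2 (Aᵀ k)‖ ^ 2 := Finset.sum_le_sum fun k _ => by
        simpa only [Real.norm_eq_abs, sq_abs] using hu.sum_inner_products_le _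
    _ = (A * Aᵀ).trace := by
        simp only [← real_inner_self_eq_norm_sq, trace_mul_comm A]
        rfl
end

lemma isHermitian_transpose_mul_self {κ ι : Type*} [Fintype κ] (M : Matrix κ ι ℝ) :
    (Mᵀ * M).IsHermitian := by
  simpa only [conjTranspose_eq_transpose_of_trivial] using isHermitian_conjTranspose_mul_self M

lemma Matrix.IsHermitian.mulVec_eigenvectorBasis_dotProduct_mulVec {κ ι : Type*} [Fintype κ]
    [Fintype ι] [DecidableEq ι] {M : Matrix κ ι ℝ}
    (H : (Mᵀ * M).IsHermitian) (i j : ι) :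
    (M *ᵥ H.eigenvectorBasis i) ⬝ᵥ (M *ᵥ H.eigenvectorBasis j) =
      if i = j then H.eigenvalues i else 0 := by
  have hv := orthonormal_iff_ite.mp H.eigenvectorBasis.orthonormal i j
  rw [EuclideanSpace.inner_eq_star_dotProduct, star_trivial, dotProduct_comm] at hv
  rw [← vecMul_transpose, ← dotProduct_mulVec, mulVec_mulVec, H.mulVec_eigenvectorBasis,
    dotProduct_smul, hv, smul_eq_mul]
  split_ifs with hij <;> simp [hij]

/-- `u` and `w` are the left and right singular vectors belonging to the nonzero singular
values. -/
lemma exists_orthonormal_nuclearNorm_eq_sum {m n : ℕ} (M : Matrix (Fin m) (Fin n) ℝ) :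
    ∃ (s : Finset (Fin n)) (u : s → EuclideanSpace ℝ (Fin m)) (w : s → EuclideanSpace ℝ (Fin n)),
      Orthonormal ℝ u ∧ Orthonormal ℝ w ∧ nuclearNorm M = ∑ i, u i ⬝ᵥ (M *ᵥ w i) := by
  set H := isHermitian_transpose_mul_self M
  set v := H.eigenvectorBasis
  set σ := fun i => √(H.eigenvalues i)
  have hσ : ∀ i j, (M *ᵥ v i) ⬝ᵥ (M *ᵥ v j) = if i = j then σ i * σ i else 0 := by
    intro i j
    have hii := H.mulVec_eigenvectorBasis_dotProduct_mulVec i i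
    rw [if_pos rfl] at hii
    have hnonneg : 0 ≤ H.eigenvalues i := hii ▸ Finset.sum_nonneg fun k _ => mul_self_nonneg _
    rw [H.mulVec_eigenvectorBasis_dotProduct_mulVec, Real.mul_self_sqrt hnonneg]
  refine ⟨({i | σ i ≠ 0} : Finset (Fin n)), fun i => (σ i)⁻¹ • WithLp.toLp 2 (M *ᵥ v i),
    fun i => v i, ?_, H.eigenvectorBasis.orthonormal.comp _ Subtype.val_injective, ?_⟩
  · rw [orthonormal_iff_ite]
    rintro ⟨i, hi⟩ ⟨j, hj⟩
    simp only [real_inner_smul_left, real_inner_smul_right, EuclideanSpace.inner_toLp_toLp,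
      star_trivial, Subtype.mk.injEq, dotProduct_comm _ (M *ᵥ v i), hσ]
    simp only [Finset.mem_filter_univ] at hi
    split_ifs with hij
    · subst hij
      field_simp
    · simp
  · calc nuclearNorm M = ∑ i, σ i := rfl
      _ = ∑ i ∈ {i | σ i ≠ 0}, σ i := (Finset.sum_filter_ne_zero _).symm
      _ = _ := by
        rw [← Finset.sum_coe_sort]
        refine Finset.sum_congr rfl fun i _ => ?_
        obtain ⟨i, hi⟩ := i
        simp only [Finset.mem_filter_univ] at hi
        simp only [WithLp.ofLp_smul, smul_dotProduct, hσ, ↓reduceIte, smul_eq_mul]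
        field_simp

lemma nuclearNorm_mul_transpose_le {m n : ℕ} {ι : Type*} [Fintype ι] (A : Matrix (Fin m) ι ℝ)
    (B : Matrix (Fin n) ι ℝ) :
    nuclearNorm (A * Bᵀ) ≤ √(A * Aᵀ).trace * √(B * Bᵀ).trace := by
  obtain ⟨s, u, w, hu, hw, hnorm⟩ := exists_orthonormal_nuclearNorm_eq_sum (A * Bᵀ)
  calc nuclearNorm (A * Bᵀ) = ∑ i, (Aᵀ *ᵥ u i) ⬝ᵥ (Bᵀ *ᵥ w i) := by
        simp only [hnorm, ← mulVec_mulVec, dotProduct_mulVec _ A, ← mulVec_transpose]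
    _ ≤ √(∑ i, (Aᵀ *ᵥ u i) ⬝ᵥ (Aᵀ *ᵥ u i)) * √(∑ i, (Bᵀ *ᵥ w i) ⬝ᵥ (Bᵀ *ᵥ w i)) :=
        sum_dotProduct_le_sqrt_mul_sqrt _ _
    _ ≤ √(A * Aᵀ).trace * √(B * Bᵀ).trace := by
        gcongr
        exacts [hu.sum_transpose_mulVec_dotProduct_self_le A,
          hw.sum_transpose_mulVec_dotProduct_self_le B]

section
open scoped MatrixOrder

lemma Matrix.PosSemidef.exists_eq_transpose_mul_self {n : Type*} [Fintype n] [DecidableEq n]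
    {K : Matrix n n ℝ} (hK : K.PosSemidef) : ∃ B : Matrix n n ℝ, K = Bᵀ * B := by
  simpa only [star_eq_conjTranspose, conjTranspose_eq_transpose_of_trivial] using
    CStarAlgebra.nonneg_iff_eq_star_mul_self.mp hK.nonneg
end

lemma trace_diagonal_mul_mul_diagonal {n R : Type*} [Fintype n] [DecidableEq n] [CommSemiring R]
    (d : n → R) (K : Matrix n n R) :
    (diagonal d * K * diagonal d).trace = ∑ i, d i ^ 2 * K i i := by
  simp only [trace, diag, mul_diagonal, diagonal_mul]
  exact Finset.sum_congr rfl fun i _ => by ring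

/-- For a real symmetric PSD matrix `K` with constant diagonal `c ≥ 0` and probability vectors
`p, q`, the nuclear norm of `diag(√p) · K · diag(√q)` is at most `c`. -/
theorem nuclearNorm_weighted_gram_le {N : ℕ} (K : Matrix (Fin N) (Fin N) ℝ)
    (hK : K.PosSemidef) (c : ℝ) (hc : 0 ≤ c) (hdiag : ∀ i, K i i = c)
    (p q : Fin N → ℝ)
    (hp_nn : ∀ i, 0 ≤ p i) (hp_sum : ∑ i, p i = 1)
    (hq_nn : ∀ i, 0 ≤ q i) (hq_sum : ∑ i, q i = 1) :
    nuclearNorm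
        (Matrix.diagonal (fun i => Real.sqrt (p i)) * K *
          Matrix.diagonal (fun i => Real.sqrt (q i))) ≤ c := by
  obtain ⟨B, rfl⟩ := hK.exists_eq_transpose_mul_self
  have weighted_trace : ∀ w : Fin N → ℝ, (∀ i, 0 ≤ w i) → ∑ i, w i = 1 →
      √((diagonal (fun i => √(w i)) * Bᵀ) * (diagonal (fun i => √(w i)) * Bᵀ)ᵀ).trace = √c := by
    intro w hw hw_sum
    rw [transpose_mul, diagonal_transpose, transpose_transpose, Matrix.mul_assoc,
      ← Matrix.mul_assoc Bᵀ, ← Matrix.mul_assoc, trace_diagonal_mul_mul_diagonal]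
    simp only [Real.sq_sqrt (hw _), hdiag, ← Finset.sum_mul, hw_sum, one_mul]
  calc nuclearNorm (diagonal (fun i => √(p i)) * (Bᵀ * B) * diagonal (fun i => √(q i)))
      = nuclearNorm ((diagonal (fun i => √(p i)) * Bᵀ) * (diagonal (fun i => √(q i)) * Bᵀ)ᵀ) := by
        simp only [transpose_mul, diagonal_transpose, transpose_transpose, Matrix.mul_assoc]
    _ ≤ √c * √c := by
        simpa only [weighted_trace p hp_nn hp_sum, weighted_trace q hq_nn hq_sum] using
          nuclearNorm_mul_transpose_le (diagonal (fun i => √(p i)) * Bᵀ)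
            (diagonal (fun i => √(q i)) * Bᵀ)
    _ = c := Real.mul_self_sqrt hc
end
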